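/- Same sign of the forward and hidden-time-reversed steady currents (Theorem 'currentverse'): Assume in addition that the kernels of W and of W̃ are both one-dimensional, that r : Fin n → ℝ is strictly positive with W *ᵥ r = 0, and that r̃ : Fin n → ℝ is strictly positive with W̃ *ᵥ r̃ = 0. Then the steady currents along the observable edge, φ := W a b * r b − W b a * r a and φ̃ := W̃ a b * r̃ b − W̃ b a * r̃ a, satisfy φ * φ̃ ≥ 0 (they have the same sign). -/

import Mathlib

/-!
Let `J` be the current of `p` along the edge `a`–`b`. Since `p` is stationary for the hidden
generator, `W p = J (e_a - e_b)`; the tilt by `Q` is exactly what makes `p` stationary for `M Q`,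
so `W̃` is again a generator, with the same rates on the edge and `W̃ p = J (e_a - e_b)`.

For any generator with one-dimensional kernel spanned by `r > 0`, such a `p` forces the current of
`r` to be a nonnegative multiple of `J`. For `J > 0`, let `x = r - t p` with `t` maximal, so that
`x ≥ 0` vanishes somewhere and `W x = t J (e_b - e_a)`. If `x b ≠ 0`, then `W x` vanishes on the
zero set of `x`, which is therefore closed under the jumps of `W`, and the restriction of `r` to it
would be a stationary vector independent of `r`. Hence `x b = 0`, and the current of `r` is
`t J - W b a * x a ≥ 0` because `W b a * x a ≤ (W x) b = t J`. The case `J < 0` follows by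
exchanging `a` and `b`, and for `J = 0` the vector `p` is itself stationary, hence proportional to
`r`. Applied to `W` and `W̃`, this gives `φ = c J` and `φ̃ = c̃ J` with `c, c̃ ≥ 0`.
-/

open Matrix

variable {ι : Type*}

structure IsMarkovGenerator [Fintype ι] (W : Matrix ι ι ℝ) : Prop where
  nonneg_of_ne : ∀ i j, i ≠ j → 0 ≤ W i j
  sum_col_eq_zero : ∀ j, ∑ i, W i j = 0

def edgeCurrent (W : Matrix ι ι ℝ) (a b : ι) (v : ι → ℝ) : ℝ :=
  W a b * v b - W b a * v a

lemma edgeCurrent_swap (W : Matrix ι ι ℝ) (a b : ι) (v : ι → ℝ) :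
    edgeCurrent W b a v = -edgeCurrent W a b v := by
  unfold edgeCurrent; ring

lemma edgeCurrent_smul (W : Matrix ι ι ℝ) (a b : ι) (c : ℝ) (v : ι → ℝ) :
    edgeCurrent W a b (c • v) = c * edgeCurrent W a b v := by
  simp only [edgeCurrent, Pi.smul_apply, smul_eq_mul]; ring

section Generator

variable [Fintype ι]

lemma Matrix.exists_eq_smul_of_finrank_ker_eq_one {W : Matrix ι ι ℝ}
    (hker : Module.finrank ℝ (LinearMap.ker W.mulVecLin) = 1) {v w : ι → ℝ}
    (hv : W *ᵥ v = 0) (hv0 : v ≠ 0) (hw : W *ᵥ w = 0) : ∃ c : ℝ, w = c • v := by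
  obtain ⟨c, hc⟩ := (finrank_eq_one_iff_of_nonzero' (⟨v, hv⟩ : LinearMap.ker W.mulVecLin)
    fun h => hv0 (congrArg Subtype.val h)).mp hker ⟨w, hw⟩
  exact ⟨c, congrArg Subtype.val hc.symm⟩

namespace IsMarkovGenerator

variable {W : Matrix ι ι ℝ}

lemma sum_mulVec (hW : IsMarkovGenerator W) (v : ι → ℝ) : ∑ i, (W *ᵥ v) i = 0 := by
  simp only [mulVec, dotProduct]
  rw [Finset.sum_comm]
  simp [← Finset.sum_mul, hW.sum_col_eq_zero]

lemma mulVec_eq_zero_of_nonneg (hW : IsMarkovGenerator W) {v : ι → ℝ} (h : 0 ≤ W *ᵥ v) :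
    W *ᵥ v = 0 :=
  funext fun i => (Finset.sum_eq_zero_iff_of_nonneg fun j _ => h j).mp (hW.sum_mulVec v) i
    (Finset.mem_univ i)

section ZeroSet

variable {x : ι → ℝ} {i : ι}

lemma mul_nonneg_of_apply_eq_zero (hW : IsMarkovGenerator W) (hx : 0 ≤ x) (hxi : x i = 0)
    (j : ι) : 0 ≤ W i j * x j := by
  obtain rfl | hij := eq_or_ne i j
  · simp [hxi]
  · exact mul_nonneg (hW.nonneg_of_ne i j hij) (hx j)

lemma mulVec_apply_nonneg_of_apply_eq_zero (hW : IsMarkovGenerator W) (hx : 0 ≤ x)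
    (hxi : x i = 0) : 0 ≤ (W *ᵥ x) i :=
  Finset.sum_nonneg fun j _ => hW.mul_nonneg_of_apply_eq_zero hx hxi j

lemma mul_le_mulVec_apply_of_apply_eq_zero (hW : IsMarkovGenerator W) (hx : 0 ≤ x)
    (hxi : x i = 0) (j : ι) : W i j * x j ≤ (W *ᵥ x) i :=
  Finset.single_le_sum (f := fun j => W i j * x j)
    (fun j _ => hW.mul_nonneg_of_apply_eq_zero hx hxi j) (Finset.mem_univ j)

lemma mul_eq_zero_of_mulVec_apply_eq_zero (hW : IsMarkovGenerator W) (hx : 0 ≤ x)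
    (hxi : x i = 0) (hWxi : (W *ᵥ x) i = 0) (j : ι) : W i j * x j = 0 :=
  (Finset.sum_eq_zero_iff_of_nonneg fun j _ => hW.mul_nonneg_of_apply_eq_zero hx hxi j).mp
    hWxi j (Finset.mem_univ j)

/-- No rate of `W` leads from the zero set of `x` into its support, so that set is closed. -/
lemma mulVec_indicator_eq_zero (hW : IsMarkovGenerator W) (hx : 0 ≤ x)
    (hWx : ∀ i, x i = 0 → (W *ᵥ x) i = 0) {r : ι → ℝ} (hr : 0 ≤ r) (hWr : W *ᵥ r = 0) :
    W *ᵥ {j | x j = 0}.indicator r = 0 := by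
  refine hW.mulVec_eq_zero_of_nonneg fun i => ?_
  by_cases hxi : x i = 0
  · have hrow : ∀ j, W i j * {j | x j = 0}.indicator r j = W i j * r j := fun j => by
      by_cases hxj : x j = 0
      · simp [hxj]
      · have := hW.mul_eq_zero_of_mulVec_apply_eq_zero hx hxi (hWx i hxi) j
        simp [(mul_eq_zero.mp this).resolve_right hxj]
    have : (W *ᵥ {j | x j = 0}.indicator r) i = (W *ᵥ r) i :=
      Finset.sum_congr rfl fun j _ => hrow j
    simp [this, hWr]
  · refine Finset.sum_nonneg fun j _ => ?_
    by_cases hxj : x j = 0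
    · simpa [hxj] using mul_nonneg (hW.nonneg_of_ne i j (by rintro rfl; exact hxi hxj)) (hr j)
    · simp [hxj]

lemma eq_zero_of_apply_eq_zero (hW : IsMarkovGenerator W)
    (hker : Module.finrank ℝ (LinearMap.ker W.mulVecLin) = 1) {r : ι → ℝ}
    (hr : ∀ i, 0 < r i) (hWr : W *ᵥ r = 0) (hx : 0 ≤ x)
    (hWx : ∀ i, x i = 0 → (W *ᵥ x) i = 0) (hxi : x i = 0) : x = 0 := by
  funext j
  rw [Pi.zero_apply]
  by_contra hxj
  have hr0 : r ≠ 0 := fun h => (hr j).ne' (congrFun h j)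
  obtain ⟨c, hc⟩ := Matrix.exists_eq_smul_of_finrank_ker_eq_one hker hWr hr0
    (hW.mulVec_indicator_eq_zero hx hWx (fun i => (hr i).le) hWr)
  have hcj := congrFun hc j
  have hci := congrFun hc i
  simp only [Set.indicator_apply, Set.mem_ofPred_eq, hxj, hxi, if_false, if_true,
    Pi.smul_apply, smul_eq_mul] at hcj hci
  have hc0 : c = 0 := (mul_eq_zero.mp hcj.symm).resolve_right (hr j).ne'
  rw [hc0, zero_mul] at hci
  exact (hr i).ne' hci

end ZeroSet

variable [DecidableEq ι] {a b : ι} {p r : ι → ℝ}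

lemma edgeCurrent_nonneg_of_pos (hW : IsMarkovGenerator W)
    (hker : Module.finrank ℝ (LinearMap.ker W.mulVecLin) = 1) (hab : a ≠ b)
    (hp : ∀ i, 0 < p i)
    (hWp : W *ᵥ p = edgeCurrent W a b p • (Pi.single a 1 - Pi.single b 1))
    (hJ : 0 < edgeCurrent W a b p) (hr : ∀ i, 0 < r i) (hWr : W *ᵥ r = 0) :
    0 ≤ edgeCurrent W a b r := by
  set J := edgeCurrent W a b p
  obtain ⟨i₀, -, hi₀⟩ :=
    Finset.exists_min_image Finset.univ (fun i => r i / p i) ⟨a, Finset.mem_univ a⟩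
  set t := r i₀ / p i₀
  have ht : 0 < t := div_pos (hr i₀) (hp i₀)
  set x := r - t • p with hx_def
  have hr_eq : ∀ i, r i = x i + t * p i := fun i => by simp [x]
  have hx : 0 ≤ x := fun i => by
    have := (le_div_iff₀ (hp i)).mp (hi₀ i (Finset.mem_univ i))
    simp only [x, Pi.sub_apply, Pi.smul_apply, smul_eq_mul, Pi.zero_apply]
    linarith
  have hxi₀ : x i₀ = 0 := by
    simp [x, t, div_mul_cancel₀ _ (hp i₀).ne']
  have hWx : W *ᵥ x = (t * J) • (Pi.single b 1 - Pi.single a 1) := by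
    rw [hx_def, mulVec_sub, mulVec_smul, hWr, hWp]
    module
  have hWxa : (W *ᵥ x) a = -(t * J) := by simp [hWx, hab]
  have hWxb : (W *ᵥ x) b = t * J := by simp [hWx, hab.symm]
  have hxa : x a ≠ 0 := fun h => by
    have := hW.mulVec_apply_nonneg_of_apply_eq_zero hx h
    rw [hWxa] at this
    nlinarith
  have hxb : x b = 0 := by
    by_contra hxb
    refine hxa (congrFun (hW.eq_zero_of_apply_eq_zero hker hr hWr hx (fun i hxi => ?_) hxi₀) a)
    have hia : i ≠ a := by rintro rfl; exact hxa hxi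
    have hib : i ≠ b := by rintro rfl; exact hxb hxi
    simp [hWx, hia, hib]
  have hflow := hW.mul_le_mulVec_apply_of_apply_eq_zero hx hxb a
  rw [hWxb] at hflow
  have : edgeCurrent W a b r = t * J - W b a * x a := by
    simp only [edgeCurrent, J, hr_eq a, hr_eq b, hxb]; ring
  linarith

theorem exists_nonneg_edgeCurrent_eq_mul (hW : IsMarkovGenerator W)
    (hker : Module.finrank ℝ (LinearMap.ker W.mulVecLin) = 1) (hab : a ≠ b)
    (hp : ∀ i, 0 < p i)
    (hWp : W *ᵥ p = edgeCurrent W a b p • (Pi.single a 1 - Pi.single b 1))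
    (hr : ∀ i, 0 < r i) (hWr : W *ᵥ r = 0) :
    ∃ c, 0 ≤ c ∧ edgeCurrent W a b r = c * edgeCurrent W a b p := by
  rcases lt_trichotomy (edgeCurrent W a b p) 0 with hJ | hJ | hJ
  · have hWp' : W *ᵥ p = edgeCurrent W b a p • (Pi.single b 1 - Pi.single a 1) := by
      rw [hWp, edgeCurrent_swap]
      module
    have := hW.edgeCurrent_nonneg_of_pos hker hab.symm hp hWp'
      (by rw [edgeCurrent_swap]; linarith) hr hWr
    rw [edgeCurrent_swap] at this
    exact ⟨_, div_nonneg_of_nonpos (by linarith) hJ.le, (div_mul_cancel₀ _ hJ.ne).symm⟩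
  · have hp0 : p ≠ 0 := fun h => (hp a).ne' (congrFun h a)
    obtain ⟨c, rfl⟩ := Matrix.exists_eq_smul_of_finrank_ker_eq_one hker
      (by rw [hWp, hJ, zero_smul]) hp0 hWr
    exact ⟨0, le_rfl, by rw [edgeCurrent_smul, hJ, mul_zero, zero_mul]⟩
  · exact ⟨_, div_nonneg (hW.edgeCurrent_nonneg_of_pos hker hab hp hWp hJ hr hWr) hJ.le,
      (div_mul_cancel₀ _ hJ.ne').symm⟩

end IsMarkovGenerator

end Generator

section TimeReversal

variable [Fintype ι] [DecidableEq ι] {p : ι → ℝ} {M : Matrix ι ι ℝ}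

noncomputable def timeReversal (p : ι → ℝ) (M : Matrix ι ι ℝ) : Matrix ι ι ℝ :=
  diagonal p * Mᵀ * (diagonal p)⁻¹

lemma timeReversal_apply (hp : ∀ i, p i ≠ 0) (i j : ι) :
    timeReversal p M i j = p i * M j i / p j := by
  have hinv : (diagonal p)⁻¹ = diagonal p⁻¹ := inv_eq_right_inv <| by
    rw [diagonal_mul_diagonal, ← diagonal_one]
    exact congrArg diagonal (funext fun i => mul_inv_cancel₀ (hp i))
  rw [timeReversal, hinv, mul_diagonal, diagonal_mul, transpose_apply, Pi.inv_apply,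
    div_eq_mul_inv]

lemma isMarkovGenerator_timeReversal (hp : ∀ i, 0 < p i) (hM : ∀ i j, i ≠ j → 0 ≤ M i j)
    (hMp : M *ᵥ p = 0) : IsMarkovGenerator (timeReversal p M) where
  nonneg_of_ne i j hij := by
    rw [timeReversal_apply fun i => (hp i).ne']
    exact div_nonneg (mul_nonneg (hp i).le (hM j i hij.symm)) (hp j).le
  sum_col_eq_zero j := by
    have hMpj : ∑ i, M j i * p i = 0 := congrFun hMp j
    simp_rw [timeReversal_apply fun i => (hp i).ne', ← Finset.sum_div, mul_comm (p _)]
    rw [hMpj, zero_div]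

lemma timeReversal_mulVec_self_apply (hp : ∀ i, p i ≠ 0) (i : ι) :
    (timeReversal p M *ᵥ p) i = p i * ∑ j, M j i := by
  simp only [mulVec, dotProduct, timeReversal_apply hp, Finset.mul_sum]
  exact Finset.sum_congr rfl fun j _ => div_mul_cancel₀ _ (hp j)

lemma edgeCurrent_timeReversal_self (hp : ∀ i, p i ≠ 0) (a b : ι) :
    edgeCurrent (timeReversal p M) a b p = p a * M b a - p b * M a b := by
  simp only [edgeCurrent, timeReversal_apply hp, div_mul_cancel₀ _ (hp _)]

end TimeReversal

lemma Matrix.sum_single_apply [Fintype ι] [DecidableEq ι] (i j : ι) (c : ℝ) (l : ι) :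
    ∑ k, single i j c k l = single i j c i l :=
  Fintype.sum_eq_single i fun _ hk => single_apply_of_row_ne (Ne.symm hk) _ _ _

section StallingTilt

variable [DecidableEq ι] {W : Matrix ι ι ℝ} {a b : ι} {p : ι → ℝ}

/-- The tilted generator `M Q` at the effective affinity `Q = log (W a b * p b / (W b a * p a))`:
the tilt turns the rates `W a b`, `W b a` into `W b a * p a / p b`, `W a b * p b / p a`. -/
noncomputable def stallingTilt (W : Matrix ι ι ℝ) (a b : ι) (p : ι → ℝ) : Matrix ι ι ℝ :=
  W + single a b (W b a * p a / p b - W a b) + single b a (W a b * p b / p a - W b a)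

lemma stallingTilt_apply_ab (hab : a ≠ b) :
    stallingTilt W a b p a b = W b a * p a / p b := by
  simp [stallingTilt, hab]

lemma stallingTilt_apply_ba (hab : a ≠ b) :
    stallingTilt W a b p b a = W a b * p b / p a := by
  simp [stallingTilt, hab, hab.symm]

lemma stallingTilt_apply_of_not {i j : ι} (hab : ¬(i = a ∧ j = b)) (hba : ¬(i = b ∧ j = a)) :
    stallingTilt W a b p i j = W i j := by
  have h₁ : ¬(a = i ∧ b = j) := fun h => hab ⟨h.1.symm, h.2.symm⟩
  have h₂ : ¬(b = i ∧ a = j) := fun h => hba ⟨h.1.symm, h.2.symm⟩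
  simp [stallingTilt, h₁, h₂]

lemma eq_stallingTilt {M : Matrix ι ι ℝ} (hab : a ≠ b)
    (hMab : M a b = W b a * p a / p b) (hMba : M b a = W a b * p b / p a)
    (hM : ∀ i j, ¬(i = a ∧ j = b) → ¬(i = b ∧ j = a) → M i j = W i j) :
    M = stallingTilt W a b p := by
  ext i j
  by_cases h₁ : i = a ∧ j = b
  · obtain ⟨rfl, rfl⟩ := h₁
    rw [hMab, stallingTilt_apply_ab hab]
  by_cases h₂ : i = b ∧ j = a
  · obtain ⟨rfl, rfl⟩ := h₂
    rw [hMba, stallingTilt_apply_ba hab]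
  · rw [hM i j h₁ h₂, stallingTilt_apply_of_not h₁ h₂]

variable [Fintype ι]

lemma stallingTilt_nonneg_of_ne (hW : IsMarkovGenerator W) (hab : a ≠ b) (hp : ∀ i, 0 < p i)
    {i j : ι} (hij : i ≠ j) : 0 ≤ stallingTilt W a b p i j := by
  by_cases h₁ : i = a ∧ j = b
  · obtain ⟨rfl, rfl⟩ := h₁
    rw [stallingTilt_apply_ab hab]
    exact div_nonneg (mul_nonneg (hW.nonneg_of_ne _ _ hab.symm) (hp _).le) (hp _).le
  by_cases h₂ : i = b ∧ j = a
  · obtain ⟨rfl, rfl⟩ := h₂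
    rw [stallingTilt_apply_ba hab]
    exact div_nonneg (mul_nonneg (hW.nonneg_of_ne _ _ hab) (hp _).le) (hp _).le
  · rw [stallingTilt_apply_of_not h₁ h₂]
    exact hW.nonneg_of_ne i j hij

lemma stallingTilt_mulVec_self (hp : ∀ i, p i ≠ 0)
    (hWp : W *ᵥ p = edgeCurrent W a b p • (Pi.single a 1 - Pi.single b 1)) :
    stallingTilt W a b p *ᵥ p = 0 := by
  have h₁ : (W b a * p a / p b - W a b) * p b = -edgeCurrent W a b p := by
    unfold edgeCurrent; field_simp [hp b]; ring
  have h₂ : (W a b * p b / p a - W b a) * p a = edgeCurrent W a b p := by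
    unfold edgeCurrent; field_simp [hp a]
  rw [stallingTilt, add_mulVec, add_mulVec, hWp, single_mulVec_eq, single_mulVec_eq, h₁, h₂]
  module

lemma mul_sum_stallingTilt_col (hW : IsMarkovGenerator W) (hab : a ≠ b) (hp : ∀ i, p i ≠ 0)
    (i : ι) : p i * ∑ j, stallingTilt W a b p j i =
      (edgeCurrent W a b p • (Pi.single a 1 - Pi.single b 1) : ι → ℝ) i := by
  have h₁ : p b * (W b a * p a / p b - W a b) = -edgeCurrent W a b p := by
    unfold edgeCurrent; field_simp [hp b]; ring
  have h₂ : p a * (W a b * p b / p a - W b a) = edgeCurrent W a b p := by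
    unfold edgeCurrent; field_simp [hp a]
  simp only [stallingTilt, Matrix.add_apply, Finset.sum_add_distrib, hW.sum_col_eq_zero,
    Matrix.sum_single_apply, zero_add]
  rcases eq_or_ne i a with rfl | hia
  · simp [hab.symm, h₂]
  rcases eq_or_ne i b with rfl | hib
  · simp [hab, h₁]
  · simp [hia, hib, Ne.symm hia, Ne.symm hib]

lemma isMarkovGenerator_timeReversal_stallingTilt (hW : IsMarkovGenerator W) (hab : a ≠ b)
    (hp : ∀ i, 0 < p i)
    (hWp : W *ᵥ p = edgeCurrent W a b p • (Pi.single a 1 - Pi.single b 1)) :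
    IsMarkovGenerator (timeReversal p (stallingTilt W a b p)) :=
  isMarkovGenerator_timeReversal hp (fun _ _ => stallingTilt_nonneg_of_ne hW hab hp)
    (stallingTilt_mulVec_self (fun i => (hp i).ne') hWp)

lemma timeReversal_stallingTilt_mulVec_self (hW : IsMarkovGenerator W) (hab : a ≠ b)
    (hp : ∀ i, p i ≠ 0) :
    timeReversal p (stallingTilt W a b p) *ᵥ p =
      edgeCurrent W a b p • (Pi.single a 1 - Pi.single b 1) :=
  funext fun i => by
    rw [timeReversal_mulVec_self_apply hp, mul_sum_stallingTilt_col hW hab hp]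

lemma edgeCurrent_timeReversal_stallingTilt (hab : a ≠ b) (hp : ∀ i, p i ≠ 0) :
    edgeCurrent (timeReversal p (stallingTilt W a b p)) a b p = edgeCurrent W a b p := by
  rw [edgeCurrent_timeReversal_self hp, stallingTilt_apply_ab hab, stallingTilt_apply_ba hab]
  unfold edgeCurrent
  field_simp [hp a, hp b]

end StallingTilt

section Hidden

variable [DecidableEq ι] {W Whid : Matrix ι ι ℝ} {a b : ι}

lemma sub_hidden_eq_vecMulVec (hab : a ≠ b)
    (hH1 : Whid a b = 0) (hH2 : Whid b a = 0)
    (hH3 : Whid a a = W a a + W b a) (hH4 : Whid b b = W b b + W a b)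
    (hH5 : ∀ i j, ¬(i = a ∧ j = b) → ¬(i = b ∧ j = a) → ¬(i = a ∧ j = a) →
      ¬(i = b ∧ j = b) → Whid i j = W i j) :
    W - Whid = vecMulVec (Pi.single a 1 - Pi.single b 1)
      (W a b • Pi.single b 1 - W b a • Pi.single a 1) := by
  ext i j
  by_cases h₁ : i = a ∧ j = b
  · obtain ⟨rfl, rfl⟩ := h₁
    simp [vecMulVec_apply, hH1, hab, hab.symm]
  by_cases h₂ : i = b ∧ j = a
  · obtain ⟨rfl, rfl⟩ := h₂
    simp [vecMulVec_apply, hH2, hab, hab.symm]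
  by_cases h₃ : i = a ∧ j = a
  · obtain ⟨rfl, rfl⟩ := h₃
    simp [vecMulVec_apply, hH3, hab]
  by_cases h₄ : i = b ∧ j = b
  · obtain ⟨rfl, rfl⟩ := h₄
    simp [vecMulVec_apply, hH4, hab.symm]
  rw [Matrix.sub_apply, hH5 i j h₁ h₂ h₃ h₄, sub_self]
  simp only [not_and] at h₁ h₂ h₃ h₄
  simp only [vecMulVec_apply, Pi.sub_apply, Pi.smul_apply, Pi.single_apply, smul_eq_mul]
  split_ifs <;> simp_all

variable [Fintype ι]

lemma mulVec_eq_edgeCurrent_smul_of_hidden (hab : a ≠ b)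
    (hH1 : Whid a b = 0) (hH2 : Whid b a = 0)
    (hH3 : Whid a a = W a a + W b a) (hH4 : Whid b b = W b b + W a b)
    (hH5 : ∀ i j, ¬(i = a ∧ j = b) → ¬(i = b ∧ j = a) → ¬(i = a ∧ j = a) →
      ¬(i = b ∧ j = b) → Whid i j = W i j)
    {p : ι → ℝ} (hp : Whid *ᵥ p = 0) :
    W *ᵥ p = edgeCurrent W a b p • (Pi.single a 1 - Pi.single b 1) := by
  have hdot : (W a b • Pi.single b 1 - W b a • Pi.single a 1) ⬝ᵥ p = edgeCurrent W a b p := by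
    simp [sub_dotProduct, edgeCurrent]
  rw [← sub_zero (W *ᵥ p), ← hp, ← sub_mulVec, sub_hidden_eq_vecMulVec hab hH1 hH2 hH3 hH4 hH5,
    vecMulVec_mulVec, hdot, op_smul_eq_smul]

end Hidden

theorem same_sign_currents {n : ℕ}
    (W Whid : Matrix (Fin n) (Fin n) ℝ)
    (hW1 : ∀ i j, i ≠ j → 0 ≤ W i j)
    (hW2 : ∀ j, ∑ i, W i j = 0)
    (a b : Fin n) (hab : a ≠ b)
    (hWab : 0 < W a b) (hWba : 0 < W b a)
    (hH1 : Whid a b = 0) (hH2 : Whid b a = 0)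
    (hH3 : Whid a a = W a a + W b a)
    (hH4 : Whid b b = W b b + W a b)
    (hH5 : ∀ i j, ¬(i = a ∧ j = b) → ¬(i = b ∧ j = a) → ¬(i = a ∧ j = a) →
      ¬(i = b ∧ j = b) → Whid i j = W i j)
    (p : Fin n → ℝ) (hp1 : ∀ i, 0 < p i)
    (hp3 : Whid *ᵥ p = 0)
    (Q : ℝ) (hQdef : Q = Real.log (W a b * p b / (W b a * p a)))
    (M : ℝ → Matrix (Fin n) (Fin n) ℝ)
    (hM1 : ∀ q, M q a b = W a b * Real.exp (-q))
    (hM2 : ∀ q, M q b a = W b a * Real.exp q)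
    (hM3 : ∀ q i j, ¬(i = a ∧ j = b) → ¬(i = b ∧ j = a) → M q i j = W i j)
    (Wt : Matrix (Fin n) (Fin n) ℝ)
    (hWt : Wt = Matrix.diagonal p * (M Q)ᵀ * (Matrix.diagonal p)⁻¹)
    (hkerW : Module.finrank ℝ (LinearMap.ker W.mulVecLin) = 1)
    (hkerWt : Module.finrank ℝ (LinearMap.ker Wt.mulVecLin) = 1)
    (r : Fin n → ℝ) (hr1 : ∀ i, 0 < r i) (hr2 : W *ᵥ r = 0)
    (rt : Fin n → ℝ) (hrt1 : ∀ i, 0 < rt i) (hrt2 : Wt *ᵥ rt = 0) :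
    0 ≤ (W a b * r b - W b a * r a) * (Wt a b * rt b - Wt b a * rt a) := by
  have hp0 : ∀ i, p i ≠ 0 := fun i => (hp1 i).ne'
  have hW : IsMarkovGenerator W := ⟨hW1, hW2⟩
  have hWp := mulVec_eq_edgeCurrent_smul_of_hidden hab hH1 hH2 hH3 hH4 hH5 hp3
  have hexpQ : Real.exp Q = W a b * p b / (W b a * p a) := by
    rw [hQdef, Real.exp_log (div_pos (mul_pos hWab (hp1 b)) (mul_pos hWba (hp1 a)))]
  have hMQ : M Q = stallingTilt W a b p := eq_stallingTilt hab
    (by rw [hM1, Real.exp_neg, hexpQ]; field_simp [hWab.ne', hWba.ne', hp0 a, hp0 b])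
    (by rw [hM2, hexpQ]; field_simp [hWba.ne', hp0 a]) (hM3 Q)
  replace hWt : Wt = timeReversal p (stallingTilt W a b p) := hMQ ▸ hWt
  subst hWt
  obtain ⟨c, hc, hφ⟩ := hW.exists_nonneg_edgeCurrent_eq_mul hkerW hab hp1 hWp hr1 hr2
  obtain ⟨c', hc', hφ'⟩ := (isMarkovGenerator_timeReversal_stallingTilt hW hab hp1 hWp)
    |>.exists_nonneg_edgeCurrent_eq_mul hkerWt hab hp1
      (by rw [edgeCurrent_timeReversal_stallingTilt hab hp0,
        timeReversal_stallingTilt_mulVec_self hW hab hp0]) hrt1 hrt2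
  rw [edgeCurrent_timeReversal_stallingTilt hab hp0] at hφ'
  change 0 ≤ edgeCurrent W a b r * edgeCurrent _ a b rt
  rw [hφ, hφ']
  calc 0 ≤ c * c' * edgeCurrent W a b p ^ 2 := by positivity
    _ = _ := by ring
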